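/- (Policy gradient error bound) Consider an MDP with discount 0 ≤ γ < 1 and an exponential-family policy π_θ with ℓ₂-bounded features ‖φ(a|x)‖₂ ≤ B₂. Suppose the action-value function Q^{π_θ} (under the true kernel) is bounded by Q_max. Let ∇J and ∇Ĵ be the policy gradients computed with the true discounted future-state distribution η_ρ(·;P^{π_θ}) and the model-induced one η_ρ(·;P̂^{π_θ}), respectively, using the same critic Q^{π_θ}. Then ‖∇J − ∇Ĵ‖₂ ≤ (γ/(1−γ)²)·Q_max·B₂·sup_x ‖P^{π_θ}(·|x) − P̂^{π_θ}(·|x)‖_TV. -/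

import Mathlib

open MeasureTheory ProbabilityTheory
open scoped NNReal ENNReal RealInnerProductSpace BigOperators

/-- `k`-fold composition of a Markov kernel, `(P^π)^0 = id`. -/
noncomputable def kernelPow {X : Type*} [MeasurableSpace X] (P : Kernel X X) : ℕ → Kernel X X
  | 0 => Kernel.id
  | k + 1 => P ∘ₖ kernelPow P k

/-- The discounted future-state distribution `η_ρ(·;P) = (1−γ) ∑_{k≥0} γ^k (ρ P^k)`. -/
noncomputable def discountedDist {X : Type*} [MeasurableSpace X] (γ : ℝ≥0)
    (ρ : Measure X) (P : Kernel X X) : Measure X :=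
  ((1 : ℝ≥0) - γ) • Measure.sum (fun k : ℕ => (γ ^ k : ℝ≥0) • ρ.bind (fun x => kernelPow P k x))

/-- Total variation distance `‖P − Q‖_TV = 2 sup_A |P(A) − Q(A)|`. -/
noncomputable def tvDist {X : Type*} [MeasurableSpace X] (P Q : Measure X) : ℝ :=
  2 * ⨆ A : {A : Set X // MeasurableSet A}, |(P A.1).toReal - (Q A.1).toReal|

/-- Exponential-family (softmax) policy `π_θ(a|x) ∝ exp(φ(a|x)ᵀθ)`. -/
noncomputable def softmaxPolicy {X A : Type*} [Fintype A] {d : ℕ}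
    (φ : X → A → EuclideanSpace ℝ (Fin d)) (θ : EuclideanSpace ℝ (Fin d))
    (x : X) (a : A) : ℝ :=
  Real.exp ⟪φ x a, θ⟫ / ∑ a' : A, Real.exp ⟪φ x a', θ⟫

/-- The pointwise policy-gradient integrand
`f(x) = E_{A∼π_θ(·|x)}[∇_θ log π_θ(A|x) · Q(x,A)]` for the softmax policy. -/
noncomputable def pgIntegrand {X A : Type*} [Fintype A] {d : ℕ}
    (φ : X → A → EuclideanSpace ℝ (Fin d)) (θ : EuclideanSpace ℝ (Fin d))
    (Q : X → A → ℝ) (x : X) : EuclideanSpace ℝ (Fin d) :=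
  ∑ a : A, softmaxPolicy φ θ x a •
    (Q x a • (φ x a - ∑ a' : A, softmaxPolicy φ θ x a' • φ x a'))

/-!
The integrand is bounded pointwise: `⟪u, f x⟫` is the covariance, under `π_θ(·|x)`, of `Q(x, ·)`
with `⟪u, φ(x, ·)⟫`, hence at most `Qmax · B₂ · ‖u‖` by Cauchy–Schwarz. For a function bounded
by `M`, the two integrals differ by at most `M · ‖μ − ν‖_TV` (Hahn decomposition). Since a Markov
kernel does not increase total variation, `‖ρPᵏ − ρP̂ᵏ‖_TV ≤ k ε`, and summing
`(1 − γ) ∑ γᵏ k ε = γ ε / (1 − γ)` bounds the distance between the two discounted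
distributions; the prefactor `(1 − γ)⁻¹` gives the claim.
-/

section InnerProduct

variable {E : Type*} [NormedAddCommGroup E] [InnerProductSpace ℝ E]

lemma norm_le_of_forall_inner_le {v : E} {C : ℝ} (hC : 0 ≤ C)
    (h : ∀ u : E, ⟪u, v⟫ ≤ C * ‖u‖) : ‖v‖ ≤ C := by
  rcases (norm_nonneg v).eq_or_lt with hv | hv
  · rw [← hv]
    exact hC
  · refine le_of_mul_le_mul_right ?_ hv
    have hv' := h v
    rwa [real_inner_self_eq_norm_mul_norm] at hv'

end InnerProduct

section WeightedSums

variable {ι : Type*} [Fintype ι] {p : ι → ℝ}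

lemma sum_mul_sub_mean_sq_le (hp1 : ∑ i, p i = 1) (g : ι → ℝ) :
    ∑ i, p i * (g i - ∑ j, p j * g j) ^ 2 ≤ ∑ i, p i * g i ^ 2 := by
  set m := ∑ j, p j * g j
  have hexpand : ∀ i, p i * (g i - m) ^ 2 = p i * g i ^ 2 - 2 * m * (p i * g i) + m ^ 2 * p i :=
    fun i => by ring
  rw [Finset.sum_congr rfl fun i _ => hexpand i, Finset.sum_add_distrib, Finset.sum_sub_distrib,
    ← Finset.mul_sum, ← Finset.mul_sum, hp1]
  nlinarith [sq_nonneg m]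

lemma sum_mul_sq_le_sq (hp : ∀ i, 0 ≤ p i) (hp1 : ∑ i, p i = 1) {f : ι → ℝ} {c : ℝ}
    (hf : ∀ i, |f i| ≤ c) : ∑ i, p i * f i ^ 2 ≤ c ^ 2 :=
  calc ∑ i, p i * f i ^ 2 ≤ ∑ i, p i * c ^ 2 :=
        Finset.sum_le_sum fun i _ => mul_le_mul_of_nonneg_left
          (sq_le_sq' (abs_le.mp (hf i)).1 (abs_le.mp (hf i)).2) (hp i)
    _ = c ^ 2 := by rw [← Finset.sum_mul, hp1, one_mul]

lemma abs_sum_mul_mul_sub_mean_le (hp : ∀ i, 0 ≤ p i) (hp1 : ∑ i, p i = 1) {q g : ι → ℝ}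
    {a b : ℝ} (hq : ∀ i, |q i| ≤ a) (hg : ∀ i, |g i| ≤ b) :
    |∑ i, p i * (q i * (g i - ∑ j, p j * g j))| ≤ a * b := by
  obtain ⟨i₀⟩ : Nonempty ι := by
    by_contra h
    rw [not_nonempty_iff] at h
    simp at hp1
  set m := ∑ j, p j * g j
  have hCS : (∑ i, p i * (q i * (g i - m))) ^ 2 ≤
      (∑ i, p i * q i ^ 2) * ∑ i, p i * (g i - m) ^ 2 :=
    Finset.sum_sq_le_sum_mul_sum_of_sq_le_mul _ (fun i _ => mul_nonneg (hp i) (sq_nonneg _))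
      (fun i _ => mul_nonneg (hp i) (sq_nonneg _)) fun i _ => le_of_eq (by ring)
  refine abs_le_of_sq_le_sq ?_ (mul_nonneg ((abs_nonneg _).trans (hq i₀))
    ((abs_nonneg _).trans (hg i₀)))
  calc _ ≤ _ := hCS
    _ ≤ a ^ 2 * b ^ 2 :=
        mul_le_mul (sum_mul_sq_le_sq hp hp1 hq)
          ((sum_mul_sub_mean_sq_le hp1 g).trans (sum_mul_sq_le_sq hp hp1 hg))
          (Finset.sum_nonneg fun i _ => mul_nonneg (hp i) (sq_nonneg _)) (sq_nonneg a)
    _ = (a * b) ^ 2 := by ring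

end WeightedSums

section Softmax

variable {X A : Type*} [Fintype A] {d : ℕ} (φ : X → A → EuclideanSpace ℝ (Fin d))
  (θ : EuclideanSpace ℝ (Fin d)) (x : X)

lemma softmaxPolicy_nonneg (a : A) : 0 ≤ softmaxPolicy φ θ x a :=
  div_nonneg (Real.exp_pos _).le (Finset.sum_nonneg fun _ _ => (Real.exp_pos _).le)

lemma sum_softmaxPolicy [Nonempty A] : ∑ a, softmaxPolicy φ θ x a = 1 := by
  simp only [softmaxPolicy, ← Finset.sum_div]
  exact div_self (Finset.sum_pos (fun _ _ => Real.exp_pos _) Finset.univ_nonempty).ne'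

lemma inner_pgIntegrand (Q : X → A → ℝ) (u : EuclideanSpace ℝ (Fin d)) :
    ⟪u, pgIntegrand φ θ Q x⟫ = ∑ a, softmaxPolicy φ θ x a *
      (Q x a * (⟪u, φ x a⟫ - ∑ a', softmaxPolicy φ θ x a' * ⟪u, φ x a'⟫)) := by
  simp only [pgIntegrand, inner_sum, real_inner_smul_right, inner_sub_right]

lemma norm_pgIntegrand_le [Nonempty A] (Q : X → A → ℝ) {B₂ Qmax : ℝ}
    (hB : ∀ a, ‖φ x a‖ ≤ B₂) (hQ : ∀ a, |Q x a| ≤ Qmax) :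
    ‖pgIntegrand φ θ Q x‖ ≤ Qmax * B₂ := by
  obtain ⟨a₀⟩ := ‹Nonempty A›
  refine norm_le_of_forall_inner_le
    (mul_nonneg ((abs_nonneg _).trans (hQ a₀)) ((norm_nonneg _).trans (hB a₀))) fun u => ?_
  rw [inner_pgIntegrand, mul_assoc]
  refine (le_abs_self _).trans (abs_sum_mul_mul_sub_mean_le (softmaxPolicy_nonneg φ θ x)
    (sum_softmaxPolicy φ θ x) hQ fun a => ?_)
  calc |⟪u, φ x a⟫| ≤ ‖u‖ * ‖φ x a‖ := abs_real_inner_le_norm _ _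
    _ ≤ ‖u‖ * B₂ := by gcongr; exact hB a
    _ = B₂ * ‖u‖ := mul_comm _ _

end Softmax

section TotalVariation

variable {X : Type*} [MeasurableSpace X]

lemma bddAbove_range_abs_toReal_measure_sub (μ ν : Measure X) [IsFiniteMeasure μ]
    [IsFiniteMeasure ν] : BddAbove (Set.range fun A : {A : Set X // MeasurableSet A} =>
      |(μ A.1).toReal - (ν A.1).toReal|) := by
  refine ⟨(μ Set.univ).toReal + (ν Set.univ).toReal, ?_⟩
  rintro _ ⟨A, rfl⟩
  refine (abs_sub _ _).trans ?_
  rw [abs_of_nonneg ENNReal.toReal_nonneg, abs_of_nonneg ENNReal.toReal_nonneg]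
  exact add_le_add (ENNReal.toReal_mono (measure_ne_top μ _) (measure_mono (Set.subset_univ _)))
    (ENNReal.toReal_mono (measure_ne_top ν _) (measure_mono (Set.subset_univ _)))

lemma abs_toReal_measure_sub_le_tvDist (μ ν : Measure X) [IsFiniteMeasure μ]
    [IsFiniteMeasure ν] {A : Set X} (hA : MeasurableSet A) :
    |(μ A).toReal - (ν A).toReal| ≤ tvDist μ ν / 2 := by
  have := le_ciSup (bddAbove_range_abs_toReal_measure_sub μ ν) ⟨A, hA⟩
  rw [tvDist]
  linarith

lemma tvDist_nonneg (μ ν : Measure X) [IsFiniteMeasure μ] [IsFiniteMeasure ν] :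
    0 ≤ tvDist μ ν := by
  linarith [(abs_nonneg _).trans (abs_toReal_measure_sub_le_tvDist μ ν MeasurableSet.empty)]

lemma tvDist_le_of_forall_abs_toReal_measure_sub_le {μ ν : Measure X} {c : ℝ}
    (h : ∀ A, MeasurableSet A → |(μ A).toReal - (ν A).toReal| ≤ c / 2) : tvDist μ ν ≤ c := by
  have : Nonempty {A : Set X // MeasurableSet A} := ⟨⟨∅, .empty⟩⟩
  have := ciSup_le fun A : {A : Set X // MeasurableSet A} => h A.1 A.2
  rw [tvDist]
  linarith

lemma setIntegral_sub_setIntegral_le_of_restrict_le {μ ν : Measure X} [IsFiniteMeasure μ]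
    [IsFiniteMeasure ν] {g : X → ℝ} (hgμ : Integrable g μ) (hgν : Integrable g ν) {M : ℝ}
    (hg : ∀ x, |g x| ≤ M) {s : Set X} (hle : ν.restrict s ≤ μ.restrict s) :
    ∫ x in s, g x ∂μ - ∫ x in s, g x ∂ν ≤ M * ((μ s).toReal - (ν s).toReal) := by
  set π := μ.restrict s - ν.restrict s
  have hπ : π + ν.restrict s = μ.restrict s := Measure.sub_add_cancel_of_le hle
  have hπμ : π ≤ μ := Measure.sub_le.trans Measure.restrict_le_self
  have : IsFiniteMeasure π := isFiniteMeasure_of_le μ hπμ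
  have hsplit : ∫ x in s, g x ∂μ = ∫ x, g x ∂π + ∫ x in s, g x ∂ν := by
    rw [← hπ, integral_add_measure (hgμ.mono_measure hπμ) hgν.restrict]
  have hmass : π.real Set.univ = (μ s).toReal - (ν s).toReal := by
    have := congrArg (fun m : Measure X => (m Set.univ).toReal) hπ
    simp only [Measure.add_apply, Measure.restrict_apply_univ] at this
    rw [ENNReal.toReal_add (measure_ne_top _ _) (measure_ne_top _ _)] at this
    rw [measureReal_def]
    linarith
  have hbound := norm_integral_le_of_norm_le_const (μ := π)
    (Filter.Eventually.of_forall fun x => (Real.norm_eq_abs (g x)).trans_le (hg x))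
  rw [Real.norm_eq_abs] at hbound
  rw [hsplit, ← hmass, add_sub_cancel_right]
  exact (le_abs_self _).trans hbound

lemma integral_sub_integral_le_mul_tvDist {μ ν : Measure X} [IsFiniteMeasure μ]
    [IsFiniteMeasure ν] {g : X → ℝ} (hgμ : Integrable g μ) (hgν : Integrable g ν) {M : ℝ}
    (hM : 0 ≤ M) (hg : ∀ x, |g x| ≤ M) :
    ∫ x, g x ∂μ - ∫ x, g x ∂ν ≤ M * tvDist μ ν := by
  obtain ⟨s, hs, hνμ, hμν⟩ := hahn_decomposition μ ν
  have hle : ν.restrict s ≤ μ.restrict s := Measure.le_iff.2 fun t ht => by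
    rw [Measure.restrict_apply ht, Measure.restrict_apply ht]
    exact hνμ _ (ht.inter hs) Set.inter_subset_right
  have hle' : μ.restrict sᶜ ≤ ν.restrict sᶜ := Measure.le_iff.2 fun t ht => by
    rw [Measure.restrict_apply ht, Measure.restrict_apply ht]
    exact hμν _ (ht.inter hs.compl) Set.inter_subset_right
  have h₁ := setIntegral_sub_setIntegral_le_of_restrict_le hgμ hgν hg hle
  have h₂ := setIntegral_sub_setIntegral_le_of_restrict_le hgν.neg hgμ.neg
    (fun x => (abs_neg (g x)).trans_le (hg x)) hle'
  simp only [Pi.neg_apply, integral_neg] at h₂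
  have e₁ := (le_abs_self _).trans (abs_toReal_measure_sub_le_tvDist μ ν hs)
  have e₂ := (neg_le_abs _).trans (abs_toReal_measure_sub_le_tvDist μ ν hs.compl)
  rw [← integral_add_compl hs hgμ, ← integral_add_compl hs hgν]
  nlinarith [mul_le_mul_of_nonneg_left e₁ hM, mul_le_mul_of_nonneg_left e₂ hM]

lemma norm_integral_sub_integral_le_mul_tvDist {E : Type*} [NormedAddCommGroup E]
    [InnerProductSpace ℝ E] [CompleteSpace E] {μ ν : Measure X} [IsFiniteMeasure μ]
    [IsFiniteMeasure ν] {f : X → E} (hfμ : Integrable f μ) (hfν : Integrable f ν) {M : ℝ}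
    (hM : 0 ≤ M) (hf : ∀ x, ‖f x‖ ≤ M) :
    ‖∫ x, f x ∂μ - ∫ x, f x ∂ν‖ ≤ M * tvDist μ ν := by
  refine norm_le_of_forall_inner_le (mul_nonneg hM (tvDist_nonneg μ ν)) fun u => ?_
  rw [inner_sub_right, ← integral_inner hfμ, ← integral_inner hfν]
  calc _ ≤ ‖u‖ * M * tvDist μ ν :=
        integral_sub_integral_le_mul_tvDist (hfμ.const_inner u) (hfν.const_inner u)
          (mul_nonneg (norm_nonneg u) hM) fun x =>
            (abs_real_inner_le_norm _ _).trans (by gcongr; exact hf x)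
    _ = M * tvDist μ ν * ‖u‖ := by ring

lemma abs_integral_sub_integral_le_half_tvDist {μ ν : Measure X} [IsProbabilityMeasure μ]
    [IsProbabilityMeasure ν] {g : X → ℝ} (hgμ : Integrable g μ) (hgν : Integrable g ν)
    (hg : ∀ x, g x ∈ Set.Icc (0 : ℝ) 1) :
    |∫ x, g x ∂μ - ∫ x, g x ∂ν| ≤ tvDist μ ν / 2 := by
  -- centred at `1/2`, `±g` is bounded by `1/2`; the constant cancels between probability measures
  have hcentre : ∀ x, |g x - 1 / 2| ≤ 1 / 2 ∧ |1 / 2 - g x| ≤ 1 / 2 := fun x => by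
    obtain ⟨h0, h1⟩ := hg x
    constructor <;> rw [abs_le] <;> constructor <;> linarith
  have h₁ := integral_sub_integral_le_mul_tvDist (g := fun x => g x - 1 / 2)
    (hgμ.sub (integrable_const _)) (hgν.sub (integrable_const _)) (by norm_num)
    fun x => (hcentre x).1
  have h₂ := integral_sub_integral_le_mul_tvDist (g := fun x => 1 / 2 - g x)
    ((integrable_const _).sub hgμ) ((integrable_const _).sub hgν) (by norm_num)
    fun x => (hcentre x).2
  rw [integral_sub hgμ (integrable_const _), integral_sub hgν (integrable_const _)] at h₁
  rw [integral_sub (integrable_const _) hgμ, integral_sub (integrable_const _) hgν] at h₂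
  simp only [integral_const, probReal_univ, one_smul] at h₁ h₂
  rw [abs_le]
  constructor <;> linarith

end TotalVariation

section Kernels

variable {X Y : Type*} [MeasurableSpace X] [MeasurableSpace Y]

lemma integrable_toReal_kernel_apply (μ : Measure X) [IsFiniteMeasure μ] (κ : Kernel X Y)
    [IsMarkovKernel κ] {A : Set Y} (hA : MeasurableSet A) :
    Integrable (fun x => (κ x A).toReal) μ :=
  Integrable.of_bound (κ.measurable_coe hA).ennreal_toReal.aestronglyMeasurable 1
    (Filter.Eventually.of_forall fun x => by
      rw [Real.norm_eq_abs, abs_of_nonneg ENNReal.toReal_nonneg]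
      exact measureReal_le_one)

lemma toReal_comp_apply (μ : Measure X) (κ : Kernel X Y) [IsFiniteKernel κ] {A : Set Y}
    (hA : MeasurableSet A) : ((κ ∘ₘ μ) A).toReal = ∫ x, (κ x A).toReal ∂μ := by
  rw [Measure.bind_apply hA κ.aemeasurable, integral_toReal (κ.measurable_coe hA).aemeasurable
    (Filter.Eventually.of_forall fun x => measure_lt_top _ _)]

lemma tvDist_comp_le {μ ν : Measure X} [IsProbabilityMeasure μ] [IsProbabilityMeasure ν]
    {κ η : Kernel X Y} [IsMarkovKernel κ] [IsMarkovKernel η] {ε : ℝ}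
    (hε : ∀ x, tvDist (κ x) (η x) ≤ ε) : tvDist (κ ∘ₘ μ) (η ∘ₘ ν) ≤ tvDist μ ν + ε := by
  refine tvDist_le_of_forall_abs_toReal_measure_sub_le fun A hA => ?_
  have hmove : |∫ x, (κ x A).toReal ∂μ - ∫ x, (κ x A).toReal ∂ν| ≤ tvDist μ ν / 2 :=
    abs_integral_sub_integral_le_half_tvDist (integrable_toReal_kernel_apply μ κ hA)
      (integrable_toReal_kernel_apply ν κ hA) fun x => ⟨ENNReal.toReal_nonneg, measureReal_le_one⟩
  have hstep : |∫ x, (κ x A).toReal ∂ν - ∫ x, (η x A).toReal ∂ν| ≤ ε / 2 := by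
    rw [← integral_sub (integrable_toReal_kernel_apply ν κ hA)
      (integrable_toReal_kernel_apply ν η hA)]
    have hpt : ∀ x, ‖(κ x A).toReal - (η x A).toReal‖ ≤ ε / 2 := fun x =>
      (abs_toReal_measure_sub_le_tvDist _ _ hA).trans (by linarith [hε x])
    simpa using norm_integral_le_of_norm_le_const (μ := ν) (Filter.Eventually.of_forall hpt)
  rw [toReal_comp_apply _ _ hA, toReal_comp_apply _ _ hA]
  linarith [abs_sub_le (∫ x, (κ x A).toReal ∂μ) (∫ x, (κ x A).toReal ∂ν) (∫ x, (η x A).toReal ∂ν)]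

end Kernels

section Discounted

variable {X : Type*} [MeasurableSpace X]

instance isMarkovKernel_kernelPow (P : Kernel X X) [IsMarkovKernel P] (k : ℕ) :
    IsMarkovKernel (kernelPow P k) := by
  induction k with
  | zero => rw [kernelPow]; infer_instance
  | succ k ih => rw [kernelPow]; infer_instance

lemma tvDist_comp_kernelPow_le (ρ : Measure X) [IsProbabilityMeasure ρ] (P P' : Kernel X X)
    [IsMarkovKernel P] [IsMarkovKernel P'] {ε : ℝ} (hε : ∀ x, tvDist (P x) (P' x) ≤ ε) (k : ℕ) :
    tvDist (kernelPow P k ∘ₘ ρ) (kernelPow P' k ∘ₘ ρ) ≤ k * ε := by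
  induction k with
  | zero =>
    simp only [kernelPow, Measure.id_comp, CharP.cast_eq_zero, zero_mul]
    exact tvDist_le_of_forall_abs_toReal_measure_sub_le fun A _ => by simp
  | succ k ih =>
    rw [kernelPow, kernelPow, ← Measure.comp_assoc, ← Measure.comp_assoc]
    calc _ ≤ tvDist (kernelPow P k ∘ₘ ρ) (kernelPow P' k ∘ₘ ρ) + ε := tvDist_comp_le hε
      _ ≤ k * ε + ε := by gcongr
      _ = (k + 1 : ℕ) * ε := by push_cast; ring

lemma discountedDist_apply (γ : ℝ≥0) (ρ : Measure X) (P : Kernel X X) {s : Set X}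
    (hs : MeasurableSet s) :
    discountedDist γ ρ P s = (1 - γ : ℝ≥0) * ∑' k, (γ : ℝ≥0∞) ^ k * (kernelPow P k ∘ₘ ρ) s := by
  simp only [discountedDist, Measure.smul_apply, Measure.sum_apply _ hs, smul_eq_mul,
    ENNReal.smul_def, ENNReal.coe_pow]

lemma isProbabilityMeasure_discountedDist {γ : ℝ≥0} (hγ : γ < 1) (ρ : Measure X)
    [IsProbabilityMeasure ρ] (P : Kernel X X) [IsMarkovKernel P] :
    IsProbabilityMeasure (discountedDist γ ρ P) := by
  constructor
  rw [discountedDist_apply γ ρ P .univ]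
  simp only [measure_univ, mul_one, ENNReal.tsum_geometric]
  rw [ENNReal.coe_sub, ENNReal.coe_one]
  exact ENNReal.mul_inv_cancel (tsub_pos_of_lt (by exact_mod_cast hγ)).ne'
    (ENNReal.sub_ne_top ENNReal.one_ne_top)

lemma toReal_discountedDist_apply {γ : ℝ≥0} (hγ : γ ≤ 1) (ρ : Measure X) [IsProbabilityMeasure ρ]
    (P : Kernel X X) [IsMarkovKernel P] {s : Set X} (hs : MeasurableSet s) :
    (discountedDist γ ρ P s).toReal =
      (1 - γ) * ∑' k, (γ : ℝ) ^ k * ((kernelPow P k ∘ₘ ρ) s).toReal := by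
  rw [discountedDist_apply γ ρ P hs, ENNReal.toReal_mul, ENNReal.coe_toReal, NNReal.coe_sub hγ,
    NNReal.coe_one,
    ENNReal.tsum_toReal_eq fun k => ENNReal.mul_ne_top (by simp) (measure_ne_top _ _)]
  simp only [ENNReal.toReal_mul, ENNReal.toReal_pow, ENNReal.coe_toReal]

lemma tvDist_discountedDist_le {γ : ℝ≥0} (hγ : γ < 1) (ρ : Measure X) [IsProbabilityMeasure ρ]
    (P P' : Kernel X X) [IsMarkovKernel P] [IsMarkovKernel P'] {ε : ℝ}
    (hε : ∀ x, tvDist (P x) (P' x) ≤ ε) :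
    tvDist (discountedDist γ ρ P) (discountedDist γ ρ P') ≤ γ / (1 - γ) * ε := by
  have hγ₁ : (γ : ℝ) < 1 := by exact_mod_cast hγ
  have hγ₀ : 0 ≤ (γ : ℝ) := γ.2
  refine tvDist_le_of_forall_abs_toReal_measure_sub_le fun A hA => ?_
  have hsummable (κ : Kernel X X) [IsMarkovKernel κ] :
      Summable fun k => (γ : ℝ) ^ k * ((kernelPow κ k ∘ₘ ρ) A).toReal :=
    (summable_geometric_of_lt_one hγ₀ hγ₁).of_norm_bounded fun k => by
      rw [norm_mul, norm_pow, Real.norm_of_nonneg hγ₀, Real.norm_of_nonneg ENNReal.toReal_nonneg]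
      exact mul_le_of_le_one_right (pow_nonneg hγ₀ k) measureReal_le_one
  have hterm : ∀ k : ℕ, ‖(γ : ℝ) ^ k * ((kernelPow P k ∘ₘ ρ) A).toReal -
      (γ : ℝ) ^ k * ((kernelPow P' k ∘ₘ ρ) A).toReal‖ ≤ k * (γ : ℝ) ^ k * (ε / 2) := fun k => by
    rw [← mul_sub, norm_mul, norm_pow, Real.norm_of_nonneg hγ₀, Real.norm_eq_abs,
      mul_comm _ (_ ^ k), mul_assoc]
    gcongr
    exact (abs_toReal_measure_sub_le_tvDist _ _ hA).trans
      (by linarith [tvDist_comp_kernelPow_le ρ P P' hε k])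
  have hsum := tsum_of_norm_bounded ((hasSum_coe_mul_geometric_of_norm_lt_one
    (by rwa [Real.norm_of_nonneg hγ₀])).mul_right (ε / 2)) hterm
  rw [toReal_discountedDist_apply hγ.le ρ P hA, toReal_discountedDist_apply hγ.le ρ P' hA,
    ← mul_sub, ← (hsummable P).tsum_sub (hsummable P'), abs_mul, abs_of_pos (sub_pos.2 hγ₁)]
  calc (1 - (γ : ℝ)) * |_| ≤ (1 - γ) * (γ / (1 - γ) ^ 2 * (ε / 2)) := by gcongr; exact hsum
    _ = γ / (1 - γ) * ε / 2 := by field_simp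

end Discounted

/-- **Policy gradient error bound (Theorem: PolicyGradientError, sup-norm case).**
The ℓ₂ error between the policy gradient computed under the true discounted
future-state distribution and under the model-induced one is bounded by
`γ/(1−γ)² · Q_max · B₂ · sup_x ‖P^{π_θ}(·|x) − P̂^{π_θ}(·|x)‖_TV`. -/
theorem policy_gradient_error_bound
    {X A : Type*} [MeasurableSpace X] [Fintype A] [Nonempty A] {d : ℕ}
    (γ : ℝ≥0) (hγ : γ < 1) (ρ : Measure X) [IsProbabilityMeasure ρ]
    (Pπ Phatπ : Kernel X X) [IsMarkovKernel Pπ] [IsMarkovKernel Phatπ]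
    (φ : X → A → EuclideanSpace ℝ (Fin d)) (θ : EuclideanSpace ℝ (Fin d))
    (B₂ : ℝ) (hB : ∀ x a, ‖φ x a‖ ≤ B₂)
    (Q : X → A → ℝ) (Qmax : ℝ) (hQ : ∀ x a, |Q x a| ≤ Qmax)
    (hf₁ : Integrable (pgIntegrand φ θ Q) (discountedDist γ ρ Pπ))
    (hf₂ : Integrable (pgIntegrand φ θ Q) (discountedDist γ ρ Phatπ))
    (ε : ℝ) (hε : ∀ x, tvDist (Pπ x) (Phatπ x) ≤ ε) :
    ‖(1 - (γ : ℝ))⁻¹ • ∫ x, pgIntegrand φ θ Q x ∂(discountedDist γ ρ Pπ) -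
        (1 - (γ : ℝ))⁻¹ • ∫ x, pgIntegrand φ θ Q x ∂(discountedDist γ ρ Phatπ)‖ ≤
      (γ : ℝ) / (1 - (γ : ℝ)) ^ 2 * Qmax * B₂ * ε := by
  have := isProbabilityMeasure_discountedDist hγ ρ Pπ
  have := isProbabilityMeasure_discountedDist hγ ρ Phatπ
  obtain ⟨x₀⟩ := nonempty_of_isProbabilityMeasure ρ
  obtain ⟨a₀⟩ := ‹Nonempty A›
  have hM : 0 ≤ Qmax * B₂ :=
    mul_nonneg ((abs_nonneg _).trans (hQ x₀ a₀)) ((norm_nonneg _).trans (hB x₀ a₀))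
  have hγ₁ : 0 < 1 - (γ : ℝ) := sub_pos.2 (by exact_mod_cast hγ)
  rw [← smul_sub, norm_smul, Real.norm_of_nonneg (inv_nonneg.2 hγ₁.le)]
  calc _ ≤ (1 - (γ : ℝ))⁻¹ * (Qmax * B₂ *
        tvDist (discountedDist γ ρ Pπ) (discountedDist γ ρ Phatπ)) := by
        gcongr
        exact norm_integral_sub_integral_le_mul_tvDist hf₁ hf₂ hM fun x =>
          norm_pgIntegrand_le φ θ x Q (hB x) (hQ x)
    _ ≤ (1 - (γ : ℝ))⁻¹ * (Qmax * B₂ * (γ / (1 - γ) * ε)) := by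
        gcongr
        exact tvDist_discountedDist_le hγ ρ Pπ Phatπ hε
    _ = _ := by field_simp
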